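/- arXiv:2503.12529 — 2 statements merged into one kernel-verified Lean document; each statement's English description precedes it below -/
import Mathlib

section
/- Let w₁,…,w_N be scalar weights on (x₀,x₁) with monic orthogonal polynomial sequences pⁱ, and let Qₙ and W be constructed from them as in the setup. Then for every n ≥ 0, ∫_{x₀}^{x₁} Qₙ(x) W(x) Qₙ(x)ᵀ dx = ‖Pₙ‖² + A‖Pₙ₊₁‖²Aᵀ + ‖Pₙ‖²Aᵀ‖Pₙ₋₁‖⁻²A‖Pₙ‖² (with the convention ‖P₋₁‖⁻² = 0 for n = 0). -/
open MeasureTheory Matrix Polynomial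

noncomputable section

/-- The staircase nilpotent matrix `A = ∑ a_{2j-1} E_{2j-1,2j} + ∑ a_{2j} E_{2j+1,2j}`
(1-based indices, here realized with 0-based `Fin N` indices). -/
def nilA (N : ℕ) (a : ℕ → ℝ) : Matrix (Fin N) (Fin N) ℝ :=
  Matrix.of fun i k =>
    if k.val % 2 = 1 ∧ i.val + 1 = k.val then a k.val
    else if k.val % 2 = 1 ∧ i.val = k.val + 1 then a i.val
    else 0

/-- `Pₙ(x) = diag(pₙ¹(x), …, pₙᴺ(x))`. -/
def diagP {N : ℕ} (p : Fin N → ℕ → Polynomial ℝ) (n : ℕ) (x : ℝ) :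
    Matrix (Fin N) (Fin N) ℝ :=
  Matrix.diagonal fun i => (p i n).eval x

/-- `‖Pₙ‖² = diag(‖pₙ¹‖², …, ‖pₙᴺ‖²)` where `‖pₙⁱ‖² = ∫_S pₙⁱ(x)² wᵢ(x) dx`. -/
def nsq {N : ℕ} (S : Set ℝ) (w : Fin N → ℝ → ℝ) (p : Fin N → ℕ → Polynomial ℝ)
    (n : ℕ) : Matrix (Fin N) (Fin N) ℝ :=
  Matrix.diagonal fun i => ∫ x in S, (p i n).eval x ^ 2 * w i x

/-- The matrix polynomials
`Qₙ(x) = Pₙ(x) + A Pₙ₊₁(x) − ‖Pₙ‖² Aᵀ ‖Pₙ₋₁‖⁻² Pₙ₋₁(x) − Pₙ(x) A x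
        + ‖Pₙ‖² Aᵀ ‖Pₙ₋₁‖⁻² Pₙ₋₁(x) A x`,
with the terms containing `‖P₋₁‖⁻²` set to `0` when `n = 0`. -/
def matQ {N : ℕ} (S : Set ℝ) (w : Fin N → ℝ → ℝ) (p : Fin N → ℕ → Polynomial ℝ)
    (a : ℕ → ℝ) (n : ℕ) (x : ℝ) : Matrix (Fin N) (Fin N) ℝ :=
  let A := nilA N a
  let C : Matrix (Fin N) (Fin N) ℝ :=
    if n = 0 then 0 else nsq S w p n * Aᵀ * (nsq S w p (n - 1))⁻¹
  diagP p n x + A * diagP p (n + 1) x - C * diagP p (n - 1) x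
    - x • (diagP p n x * A) + x • (C * diagP p (n - 1) x * A)

/-- `W(x) = T(x) diag(w₁(x), …, w_N(x)) T(x)ᵀ` with `T(x) = I + Ax`. -/
def matW {N : ℕ} (w : Fin N → ℝ → ℝ) (a : ℕ → ℝ) (x : ℝ) :
    Matrix (Fin N) (Fin N) ℝ :=
  (1 + x • nilA N a) * Matrix.diagonal (fun i => w i x) * (1 + x • nilA N a)ᵀ

/-!
Since `A D A = 0` for every diagonal `D` and in particular `A² = 0`, `I − Ax` inverts `T(x)` and
`Qₙ = Rₙ (I − Ax)` with `Rₙ = Pₙ + A Pₙ₊₁ − Cₙ Pₙ₋₁`, `Cₙ = ‖Pₙ‖² Aᵀ ‖Pₙ₋₁‖⁻²`. Hence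
`Qₙ W Qₙᵀ = Rₙ diag(wᵢ) Rₙᵀ`, and as `Pₙ₋₁, Pₙ, Pₙ₊₁` are orthogonal for `diag(wᵢ)` the integral
is `‖Pₙ‖² + A ‖Pₙ₊₁‖² Aᵀ + Cₙ ‖Pₙ₋₁‖² Cₙᵀ`, the last term reducing to the claimed one.
-/

/-- Holds for singular `A` too, where Mathlib's `A⁻¹` is `0`. -/
theorem Matrix.nonsing_inv_mul_mul_nonsing_inv {n α : Type*} [Fintype n] [DecidableEq n]
    [CommRing α] (A : Matrix n n α) : A⁻¹ * A * A⁻¹ = A⁻¹ := by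
  by_cases h : IsUnit A.det
  · rw [nonsing_inv_mul A h, Matrix.one_mul]
  · rw [nonsing_inv_apply_not_isUnit A h, Matrix.mul_zero]

theorem Matrix.mul_diagonal_mul_apply {ι m n α : Type*} [Fintype ι] [DecidableEq ι]
    [NonUnitalNonAssocSemiring α] (M₁ : Matrix m ι α) (d : ι → α) (M₂ : Matrix ι n α)
    (i : m) (j : n) : (M₁ * diagonal d * M₂) i j = ∑ k, M₁ i k * d k * M₂ k j := by
  simp only [mul_apply (M := M₁ * diagonal d), mul_diagonal]

theorem Matrix.integrable_mul_diagonal_mul_apply {α ι m n : Type*} [MeasurableSpace α]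
    {μ : Measure α} [Fintype ι] [DecidableEq ι] (M₁ : Matrix m ι ℝ) (M₂ : Matrix ι n ℝ)
    {f : ι → α → ℝ} (hf : ∀ k, Integrable (f k) μ) (i : m) (j : n) :
    Integrable (fun x => (M₁ * diagonal (fun k => f k x) * M₂) i j) μ := by
  simp only [mul_diagonal_mul_apply]
  exact integrable_finsetSum _ fun k _ => ((hf k).const_mul _).mul_const _

theorem Matrix.integral_mul_diagonal_mul_apply {α ι m n : Type*} [MeasurableSpace α]
    {μ : Measure α} [Fintype ι] [DecidableEq ι] (M₁ : Matrix m ι ℝ) (M₂ : Matrix ι n ℝ)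
    {f : ι → α → ℝ} (hf : ∀ k, Integrable (f k) μ) (i : m) (j : n) :
    ∫ x, (M₁ * diagonal (fun k => f k x) * M₂) i j ∂μ
      = (M₁ * diagonal (fun k => ∫ x, f k x ∂μ) * M₂) i j := by
  simp only [mul_diagonal_mul_apply]
  rw [integral_finsetSum _ fun k _ => ((hf k).const_mul _).mul_const _]
  simp only [integral_mul_const, integral_const_mul]

theorem Polynomial.integrable_eval_mul_of_integrable_abs_pow_mul {μ : Measure ℝ} {w : ℝ → ℝ}
    (hmom : ∀ n : ℕ, Integrable (fun x => |x| ^ n * w x) μ) (q : ℝ[X]) :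
    Integrable (fun x => q.eval x * w x) μ := by
  have hw : AEStronglyMeasurable w μ := by simpa using (hmom 0).aestronglyMeasurable
  have hpow : ∀ j : ℕ, Integrable (fun x => x ^ j * w x) μ := fun j =>
    (hmom j).mono ((continuous_pow j).aestronglyMeasurable.mul hw)
      (ae_of_all _ fun x => by simp)
  simp only [eval_eq_sum_range, Finset.sum_mul, mul_assoc]
  exact integrable_finsetSum _ fun j _ => (hpow j).const_mul _

section nilA

variable {N : ℕ} {a : ℕ → ℝ}

theorem nilA_apply_of_even {i k : Fin N} (hk : k.val % 2 = 0) : nilA N a i k = 0 := by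
  simp only [nilA, of_apply]
  rw [if_neg (by omega), if_neg (by omega)]

theorem nilA_apply_of_odd {i k : Fin N} (hk : k.val % 2 = 1) : nilA N a k i = 0 := by
  simp only [nilA, of_apply]
  rw [if_neg (by omega), if_neg (by omega)]

/-- The nonzero columns of `A` have odd index and its nonzero rows even index. -/
theorem nilA_mul_diagonal_mul_nilA (d : Fin N → ℝ) :
    nilA N a * diagonal d * nilA N a = 0 := by
  ext i l
  rw [Matrix.mul_assoc, mul_apply]
  refine Finset.sum_eq_zero fun k _ => ?_
  rcases Nat.mod_two_eq_zero_or_one k.val with hk | hk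
  · rw [nilA_apply_of_even hk, zero_mul]
  · simp [diagonal_mul, nilA_apply_of_odd hk]

theorem nilA_mul_nilA : nilA N a * nilA N a = 0 := by
  simpa using nilA_mul_diagonal_mul_nilA (a := a) (fun _ => 1)

theorem one_sub_smul_nilA_mul_one_add_smul_nilA (x : ℝ) :
    (1 - x • nilA N a) * (1 + x • nilA N a) = 1 := by
  simp [sub_mul, mul_add, nilA_mul_nilA]

end nilA

section OrthogonalExpansion

variable {N : ℕ} {S : Set ℝ} {w : Fin N → ℝ → ℝ} {p : Fin N → ℕ → ℝ[X]}

theorem diagP_transpose (n : ℕ) (x : ℝ) : (diagP p n x)ᵀ = diagP p n x :=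
  diagonal_transpose _

theorem diagP_mul_diagonal_mul_diagP (m n : ℕ) (x : ℝ) :
    diagP p m x * diagonal (fun k => w k x) * diagP p n x
      = diagonal (fun k => (p k m).eval x * (p k n).eval x * w k x) := by
  simp only [diagP, diagonal_mul_diagonal]
  congr 1
  funext k
  ring

theorem diagonal_integral_eval_mul_eval_mul
    (horth : ∀ k, ∀ m n : ℕ, m ≠ n → ∫ x in S, (p k m).eval x * (p k n).eval x * w k x = 0)
    (m n : ℕ) :
    diagonal (fun k => ∫ x in S, (p k m).eval x * (p k n).eval x * w k x)
      = if m = n then nsq S w p m else 0 := by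
  split_ifs with h
  · subst h
    simp only [nsq, sq]
  · simp only [horth _ _ _ h, diagonal_zero]

/-- Pythagoras for the matrix inner product `⟨F, G⟩ = ∫_S F diag(w) Gᵀ`, applied to
combinations of the mutually orthogonal `Pₙ`. -/
theorem integral_sum_mul_diagP_mul_diagonal_mul_transpose_apply
    (hint : ∀ k (q : ℝ[X]), Integrable (fun x => q.eval x * w k x) (volume.restrict S))
    (horth : ∀ k, ∀ m n : ℕ, m ≠ n → ∫ x in S, (p k m).eval x * (p k n).eval x * w k x = 0)
    {ι : Type*} [Fintype ι] (M : ι → Matrix (Fin N) (Fin N) ℝ) {d : ι → ℕ}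
    (hd : Function.Injective d) (i j : Fin N) :
    ∫ x in S, ((∑ s, M s * diagP p (d s) x) * diagonal (fun k => w k x)
        * (∑ s, M s * diagP p (d s) x)ᵀ) i j
      = (∑ s, M s * nsq S w p (d s) * (M s)ᵀ) i j := by
  classical
  have hint' : ∀ k m n, Integrable (fun x => (p k m).eval x * (p k n).eval x * w k x)
      (volume.restrict S) := fun k m n => by simpa using hint k (p k m * p k n)
  have hexpand : ∀ x, (∑ s, M s * diagP p (d s) x) * diagonal (fun k => w k x)
      * (∑ s, M s * diagP p (d s) x)ᵀ = ∑ s, ∑ t, M s * diagonal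
        (fun k => (p k (d s)).eval x * (p k (d t)).eval x * w k x) * (M t)ᵀ := by
    intro x
    simp only [transpose_sum, transpose_mul, diagP_transpose, Finset.sum_mul, Finset.mul_sum,
      ← diagP_mul_diagonal_mul_diagP, Matrix.mul_assoc]
    exact Finset.sum_comm
  simp only [hexpand, Matrix.sum_apply]
  rw [integral_finsetSum _ fun s _ => integrable_finsetSum _ fun t _ =>
    integrable_mul_diagonal_mul_apply _ _ (fun k => hint' k _ _) _ _]
  refine Finset.sum_congr rfl fun s _ => ?_
  rw [integral_finsetSum _ fun t _ =>
    integrable_mul_diagonal_mul_apply _ _ (fun k => hint' k _ _) _ _]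
  simp only [integral_mul_diagonal_mul_apply _ _ (fun k => hint' k _ _),
    diagonal_integral_eval_mul_eval_mul horth, hd.eq_iff, mul_ite, ite_mul, mul_zero, zero_mul]
  rw [← Matrix.sum_apply, Finset.sum_ite_eq, if_pos (Finset.mem_univ s)]

end OrthogonalExpansion

section Factorization

variable {N : ℕ} (S : Set ℝ) (w : Fin N → ℝ → ℝ) (p : Fin N → ℕ → ℝ[X]) (a : ℕ → ℝ)

def matC (n : ℕ) : Matrix (Fin N) (Fin N) ℝ :=
  if n = 0 then 0 else nsq S w p n * (nilA N a)ᵀ * (nsq S w p (n - 1))⁻¹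

def matR (n : ℕ) (x : ℝ) : Matrix (Fin N) (Fin N) ℝ :=
  diagP p n x + nilA N a * diagP p (n + 1) x - matC S w p a n * diagP p (n - 1) x

/-- The cross term `A Pₙ₊₁ A x` vanishes since `A D A = 0` for diagonal `D`. -/
theorem matQ_eq_matR_mul_one_sub_smul_nilA (n : ℕ) (x : ℝ) :
    matQ S w p a n x = matR S w p a n x * (1 - x • nilA N a) := by
  have hcross : nilA N a * diagP p (n + 1) x * nilA N a = 0 := nilA_mul_diagonal_mul_nilA _
  rw [matQ, matR, matC, mul_sub, mul_one, Matrix.mul_smul, sub_mul, add_mul, hcross]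
  simp only [smul_add, smul_sub, smul_zero]
  abel

theorem matR_zero_eq_sum (x : ℝ) :
    matR S w p a 0 x = ∑ s : Fin 2, ![1, nilA N a] s * diagP p (![0, 1] s) x := by
  simp [matR, matC, Fin.sum_univ_two]

theorem matR_succ_eq_sum (m : ℕ) (x : ℝ) :
    matR S w p a (m + 1) x = ∑ s : Fin 3, ![1, nilA N a, -matC S w p a (m + 1)] s
      * diagP p (![m + 1, m + 2, m] s) x := by
  simp [matR, Fin.sum_univ_three, sub_eq_add_neg]

variable {w a}

theorem mul_one_sub_smul_nilA_mul_matW_mul_transpose (R : Matrix (Fin N) (Fin N) ℝ) (x : ℝ) :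
    R * (1 - x • nilA N a) * matW w a x * (R * (1 - x • nilA N a))ᵀ
      = R * diagonal (fun k => w k x) * Rᵀ := by
  have hinv := one_sub_smul_nilA_mul_one_add_smul_nilA (N := N) (a := a) x
  have hinvT : (1 + x • nilA N a)ᵀ * (1 - x • nilA N a)ᵀ = 1 := by
    rw [← transpose_mul, hinv, transpose_one]
  calc R * (1 - x • nilA N a) * matW w a x * (R * (1 - x • nilA N a))ᵀ
      = R * ((1 - x • nilA N a) * (1 + x • nilA N a)) * diagonal (fun k => w k x)
          * ((1 + x • nilA N a)ᵀ * (1 - x • nilA N a)ᵀ) * Rᵀ := by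
        simp only [matW, transpose_mul, Matrix.mul_assoc]
    _ = R * diagonal (fun k => w k x) * Rᵀ := by rw [hinv, hinvT, Matrix.mul_one, Matrix.mul_one]

variable {S p}

theorem matC_succ_mul_nsq_mul_transpose (m : ℕ) :
    matC S w p a (m + 1) * nsq S w p m * (matC S w p a (m + 1))ᵀ
      = nsq S w p (m + 1) * (nilA N a)ᵀ * (nsq S w p m)⁻¹ * nilA N a * nsq S w p (m + 1) := by
  have hsymm : ∀ r, (nsq S w p r)ᵀ = nsq S w p r := fun r => diagonal_transpose _
  simp only [matC, Nat.add_one_ne_zero, if_false, Nat.add_sub_cancel, transpose_mul,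
    transpose_transpose, transpose_nonsing_inv, hsymm]
  calc nsq S w p (m + 1) * (nilA N a)ᵀ * (nsq S w p m)⁻¹ * nsq S w p m
        * ((nsq S w p m)⁻¹ * (nilA N a * nsq S w p (m + 1)))
      = nsq S w p (m + 1) * (nilA N a)ᵀ * ((nsq S w p m)⁻¹ * nsq S w p m * (nsq S w p m)⁻¹)
          * nilA N a * nsq S w p (m + 1) := by simp only [Matrix.mul_assoc]
    _ = _ := by rw [nonsing_inv_mul_mul_nonsing_inv]

end Factorization

theorem matQ_squared_norm_general
    (N : ℕ) (x₀ x₁ : ℝ) (w : Fin N → ℝ → ℝ) (p : Fin N → ℕ → Polynomial ℝ)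
    (a : ℕ → ℝ)
    (hmom : ∀ i (n : ℕ), Integrable (fun x => |x| ^ n * w i x))
    (horth : ∀ i, ∀ n m : ℕ, n ≠ m →
      ∫ x in Set.Ioo x₀ x₁, (p i n).eval x * (p i m).eval x * w i x = 0) :
    ∀ n : ℕ, ∀ i j : Fin N,
      ∫ x in Set.Ioo x₀ x₁,
        (matQ (Set.Ioo x₀ x₁) w p a n x * matW w a x *
          (matQ (Set.Ioo x₀ x₁) w p a n x)ᵀ) i j =
      (nsq (Set.Ioo x₀ x₁) w p n
        + nilA N a * nsq (Set.Ioo x₀ x₁) w p (n + 1) * (nilA N a)ᵀ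
        + (if n = 0 then 0 else
            nsq (Set.Ioo x₀ x₁) w p n * (nilA N a)ᵀ *
              (nsq (Set.Ioo x₀ x₁) w p (n - 1))⁻¹ * nilA N a *
              nsq (Set.Ioo x₀ x₁) w p n)) i j := by
  intro n i j
  have hint : ∀ k (q : ℝ[X]), Integrable (fun x => q.eval x * w k x)
      (volume.restrict (Set.Ioo x₀ x₁)) := fun k q =>
    (integrable_eval_mul_of_integrable_abs_pow_mul (hmom k) q).restrict
  simp only [matQ_eq_matR_mul_one_sub_smul_nilA, mul_one_sub_smul_nilA_mul_matW_mul_transpose]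
  cases n with
  | zero =>
    simp only [matR_zero_eq_sum, integral_sum_mul_diagP_mul_diagonal_mul_transpose_apply hint
      horth _ (by decide : Function.Injective ![0, 1])]
    simp [Fin.sum_univ_two]
  | succ m =>
    have hd : Function.Injective ![m + 1, m + 2, m] := by
      intro s t h
      fin_cases s <;> fin_cases t <;> simp_all
    simp only [matR_succ_eq_sum, integral_sum_mul_diagP_mul_diagonal_mul_transpose_apply hint
      horth _ hd]
    simp [Fin.sum_univ_three, matC_succ_mul_nsq_mul_transpose]

/-- The squared norm of `Qₙ`:
`∫ Qₙ W Qₙᵀ = ‖Pₙ‖² + A ‖Pₙ₊₁‖² Aᵀ + ‖Pₙ‖² Aᵀ ‖Pₙ₋₁‖⁻² A ‖Pₙ‖²`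
(with the convention `‖P₋₁‖⁻² = 0` when `n = 0`). -/
theorem matQ_squared_norm
    (N : ℕ) (x₀ x₁ : ℝ) (w : Fin N → ℝ → ℝ) (p : Fin N → ℕ → Polynomial ℝ)
    (a : ℕ → ℝ)
    (hmeas : ∀ i, Measurable (w i))
    (hpos : ∀ i, ∀ᵐ x ∂volume, x ∈ Set.Ioo x₀ x₁ → 0 < w i x)
    (hsupp : ∀ i, ∀ x ∉ Set.Ioo x₀ x₁, w i x = 0)
    (hmom : ∀ i (n : ℕ), Integrable (fun x => |x| ^ n * w i x))
    (hmonic : ∀ i n, (p i n).Monic)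
    (hdeg : ∀ i n, (p i n).natDegree = n)
    (horth : ∀ i, ∀ n m : ℕ, n ≠ m →
      ∫ x in Set.Ioo x₀ x₁, (p i n).eval x * (p i m).eval x * w i x = 0)
    (hnorm : ∀ i n, 0 < ∫ x in Set.Ioo x₀ x₁, (p i n).eval x ^ 2 * w i x)
    (ha : ∀ k, 1 ≤ k → k ≤ N - 1 → a k ≠ 0) :
    ∀ n : ℕ, ∀ i j : Fin N,
      ∫ x in Set.Ioo x₀ x₁,
        (matQ (Set.Ioo x₀ x₁) w p a n x * matW w a x *
          (matQ (Set.Ioo x₀ x₁) w p a n x)ᵀ) i j =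
      (nsq (Set.Ioo x₀ x₁) w p n
        + nilA N a * nsq (Set.Ioo x₀ x₁) w p (n + 1) * (nilA N a)ᵀ
        + (if n = 0 then 0 else
            nsq (Set.Ioo x₀ x₁) w p n * (nilA N a)ᵀ *
              (nsq (Set.Ioo x₀ x₁) w p (n - 1))⁻¹ * nilA N a *
              nsq (Set.Ioo x₀ x₁) w p n)) i j :=
  matQ_squared_norm_general N x₀ x₁ w p a hmom horth
end
end

section
/- Let α, β > −1 and a ∈ ℝ∖{0}. Let ℓ^{(α)}, ℓ^{(β)} be the monic Laguerre orthogonal polynomial sequences, and for n ≥ 0 define the 2×2 matrix polynomial Qₙ(x) = [[ℓₙ^{(α)}(x), a(ℓₙ₊₁^{(β)}(x) − x·ℓₙ^{(α)}(x))], [−a·n·(Γ(n+β+1)/Γ(n+α))·ℓₙ₋₁^{(α)}(x), a²·n·(Γ(n+β+1)/Γ(n+α))·x·ℓₙ₋₁^{(α)}(x) + ℓₙ^{(β)}(x)]] (for n = 0 the terms with factor n vanish). Then for all n ≥ 0 and all x: x·Qₙ''(x) + Qₙ'(x)·[[α+1−x, a·x·(2+β−α)], [0, β+1−x]] + Qₙ(x)·[[0,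 a(β+1)], [0, 1]] = [[−n, 0], [0, −n+1]]·Qₙ(x). (Qₙ is the sequence of orthogonal polynomials for the weight W(x) = e^{−x}[[x^{α}+a²x^{β+2}, ax^{β+1}],[ax^{β+1}, x^{β}]] on (0,∞).) -/
/-!
Write `L p = x p'' + (α + 1 - x) p'`. Integrating by parts against `e^{-x} x^α` on `(0, ∞)`, with
boundary terms `e^{-x} x^{α+1} (…)` that vanish at both ends because `α > -1`, shows that `L` is
symmetric for the Laguerre inner product. Since `L` does not raise degrees and multiplies the
leading coefficient of a polynomial of degree `n` by `-n`, the polynomial `L ℓₙ + n ℓₙ` has degree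
`< n`; it is therefore orthogonal to `ℓₙ`, and by symmetry of `L` also to itself, so it vanishes:
`L ℓₙ^{(α)} = -n ℓₙ^{(α)}`. Each entry of the matrix identity is a linear combination of these
Laguerre equations for `ℓₙ^{(α)}`, `ℓₙ₋₁^{(α)}`, `ℓₙ^{(β)}` and `ℓₙ₊₁^{(β)}`, whatever the value of
the Gamma ratio.
-/

open MeasureTheory Matrix Polynomial

noncomputable section

/-- The 2×2 Laguerre-type matrix orthogonal polynomials built from the monic
Laguerre polynomials `ℓ^{(α)}` and `ℓ^{(β)}` (for `n = 0` the terms with factor `n`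
vanish). -/
def QLag (α β a : ℝ) (ℓa ℓb : ℕ → Polynomial ℝ) (n : ℕ) (x : ℝ) :
    Matrix (Fin 2) (Fin 2) ℝ :=
  !![(ℓa n).eval x,
     a * ((ℓb (n + 1)).eval x - x * (ℓa n).eval x);
     -(a * (n : ℝ) * (Real.Gamma ((n : ℝ) + β + 1) / Real.Gamma ((n : ℝ) + α)) *
        (ℓa (n - 1)).eval x),
     a ^ 2 * (n : ℝ) * (Real.Gamma ((n : ℝ) + β + 1) / Real.Gamma ((n : ℝ) + α)) *
        x * (ℓa (n - 1)).eval x + (ℓb n).eval x]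

open Set Filter Topology

namespace Polynomial.Sequence

variable {R : Type*} [CommRing R] (S : Sequence R) (B : LinearMap.BilinForm R R[X])

theorem bilinForm_eq_zero_of_degree_lt (hS : ∀ i, IsUnit (S i).leadingCoeff)
    (horth : ∀ i j, i ≠ j → B (S i) (S j) = 0) {n : ℕ} {q : R[X]} (hq : q.degree < n) :
    B (S n) q = 0 := by
  have hspan : q ∈ Submodule.span R (S '' Iio n) := by
    rw [S.span_degreeLT fun i _ => hS i]
    exact mem_degreeLT.mpr hq
  refine Submodule.span_le (p := LinearMap.ker (B (S n))) |>.mpr ?_ hspan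
  rintro _ ⟨i, hi, rfl⟩
  exact horth n i (ne_of_gt hi)

theorem apply_eq_smul_of_symmetric (hS : ∀ i, IsUnit (S i).leadingCoeff)
    (horth : ∀ i j, i ≠ j → B (S i) (S j) = 0) (hB : ∀ p, B p p = 0 → p = 0)
    {L : R[X] → R[X]} (hL : ∀ {n : ℕ} {p : R[X]}, p.degree < n → (L p).degree < n)
    (hLB : ∀ p q, B (L p) q = B p (L q)) {n : ℕ} {c : R}
    (hc : (L (S n) - c • S n).degree < n) : L (S n) = c • S n := by
  set q := L (S n) - c • S n
  refine sub_eq_zero.mp (hB q ?_)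
  calc B q q = B (L (S n) - c • S n) q := rfl
    _ = B (S n) (L q) - c * B (S n) q := by
        rw [LinearMap.map_sub₂, LinearMap.map_smul₂, smul_eq_mul, hLB]
    _ = 0 := by
        rw [S.bilinForm_eq_zero_of_degree_lt B hS horth (hL hc),
          S.bilinForm_eq_zero_of_degree_lt B hS horth hc, mul_zero, sub_zero]

end Polynomial.Sequence

section LaguerreOperator

variable {R : Type*} [CommRing R]

def laguerreOp (α : R) (p : R[X]) : R[X] :=
  X * derivative (derivative p) + (C (α + 1) - X) * derivative p

theorem coeff_laguerreOp (α : R) (p : R[X]) (k : ℕ) :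
    (laguerreOp α p).coeff k = (k + 1) * (k + α + 1) * p.coeff (k + 1) - k * p.coeff k := by
  rcases k with _ | k
  · simp [laguerreOp, coeff_derivative]
  · simp only [laguerreOp, coeff_add, sub_mul, coeff_sub, coeff_C_mul, coeff_X_mul,
      coeff_derivative]
    push_cast
    ring

theorem degree_laguerreOp_lt (α : R) {n : ℕ} {p : R[X]} (hp : p.degree < n) :
    (laguerreOp α p).degree < n := by
  rw [degree_lt_iff_coeff_zero] at hp ⊢
  intro m hm
  rw [coeff_laguerreOp, hp m hm, hp (m + 1) (by omega)]
  ring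

theorem degree_laguerreOp_add_smul_lt (α : R) {n : ℕ} {p : R[X]} (hp : p.natDegree ≤ n) :
    (laguerreOp α p + (n : R) • p).degree < n := by
  rw [degree_lt_iff_coeff_zero]
  intro m hm
  rw [coeff_add, coeff_smul, coeff_laguerreOp,
    coeff_eq_zero_of_natDegree_lt (by omega : p.natDegree < m + 1)]
  rcases hm.eq_or_lt with rfl | hlt
  · simp
  · rw [coeff_eq_zero_of_natDegree_lt (by omega : p.natDegree < m)]
    simp

end LaguerreOperator

section LaguerreForm

variable {α : ℝ}

theorem integrableOn_eval_mul_laguerreWeight (hα : -1 < α) (p : ℝ[X]) :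
    IntegrableOn (fun x => p.eval x * (Real.exp (-x) * x ^ α)) (Ioi 0) := by
  induction p using Polynomial.induction_on' with
  | add p q hp hq =>
    exact (hp.add hq).congr_fun (fun x _ => by simp only [Pi.add_apply, eval_add, add_mul])
      measurableSet_Ioi
  | monomial k c =>
    have hk : 0 < (k : ℝ) + α + 1 := by linarith [k.cast_nonneg (α := ℝ)]
    refine IntegrableOn.congr_fun ((Real.GammaIntegral_convergent hk).const_mul c)
      (fun x (hx : 0 < x) => ?_) measurableSet_Ioi
    rw [eval_monomial, add_sub_cancel_right, Real.rpow_add hx, Real.rpow_natCast]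
    ring

theorem integrableOn_eval_mul_eval_mul_laguerreWeight (hα : -1 < α) (p q : ℝ[X]) :
    IntegrableOn (fun x => p.eval x * q.eval x * (Real.exp (-x) * x ^ α)) (Ioi 0) := by
  simpa only [eval_mul] using integrableOn_eval_mul_laguerreWeight hα (p * q)

def laguerreForm (hα : -1 < α) : LinearMap.BilinForm ℝ ℝ[X] :=
  LinearMap.mk₂ ℝ (fun p q => ∫ x in Ioi 0, p.eval x * q.eval x * (Real.exp (-x) * x ^ α))
    (fun p₁ p₂ q => by
      simp only [eval_add, add_mul]
      exact integral_add (integrableOn_eval_mul_eval_mul_laguerreWeight hα _ _)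
        (integrableOn_eval_mul_eval_mul_laguerreWeight hα _ _))
    (fun c p q => by simp only [eval_smul, smul_eq_mul, mul_assoc, integral_const_mul])
    (fun p q₁ q₂ => by
      simp only [eval_add, mul_add, add_mul]
      exact integral_add (integrableOn_eval_mul_eval_mul_laguerreWeight hα _ _)
        (integrableOn_eval_mul_eval_mul_laguerreWeight hα _ _))
    (fun c p q => by
      simp only [eval_smul, smul_eq_mul, ← integral_const_mul]
      congr with x
      ring)

theorem laguerreForm_apply (hα : -1 < α) (p q : ℝ[X]) :
    laguerreForm hα p q = ∫ x in Ioi 0, p.eval x * q.eval x * (Real.exp (-x) * x ^ α) :=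
  rfl

theorem laguerreForm_self_pos (hα : -1 < α) {p : ℝ[X]} (hp : p ≠ 0) :
    0 < laguerreForm hα p p := by
  rw [laguerreForm_apply, setIntegral_pos_iff_support_of_nonneg_ae _
    (integrableOn_eval_mul_eval_mul_laguerreWeight hα p p)]
  · have hsub : Ioi 0 \ {x | p.IsRoot x} ⊆
        Function.support (fun x => p.eval x * p.eval x * (Real.exp (-x) * x ^ α)) ∩ Ioi 0 :=
      fun x ⟨(hx : 0 < x), hroot⟩ => ⟨by simp_all [Real.rpow_pos_of_pos hx α |>.ne'], hx⟩
    refine lt_of_lt_of_le ?_ (measure_mono hsub)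
    rw [measure_sdiff_null ((finite_setOfPred_isRoot hp).measure_zero _), Real.volume_Ioi]
    exact ENNReal.zero_lt_top
  · filter_upwards [self_mem_ae_restrict measurableSet_Ioi] with x (hx : 0 < x)
    exact mul_nonneg (mul_self_nonneg _) (by positivity)

theorem tendsto_exp_neg_mul_rpow_mul_eval_atTop (s : ℝ) (p : ℝ[X]) :
    Tendsto (fun x => Real.exp (-x) * x ^ s * p.eval x) atTop (𝓝 0) := by
  have hp : (fun x => p.eval x) =O[atTop] fun x => x ^ (p.natDegree : ℝ) := by
    refine (isBigO_atTop_of_degree_le p (X ^ p.natDegree) (by simp [degree_le_natDegree])).trans ?_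
    simp only [eval_pow, eval_X, Real.rpow_natCast]
    exact Asymptotics.isBigO_refl _ _
  have hlim := tendsto_rpow_mul_exp_neg_mul_atTop_nhds_zero (s + p.natDegree) 1 one_pos
  refine ((Asymptotics.isBigO_refl (fun x => Real.exp (-x) * x ^ s) atTop).mul hp).trans_tendsto ?_
  refine hlim.congr' ?_
  filter_upwards [eventually_gt_atTop 0] with x hx
  rw [Real.rpow_add hx, neg_one_mul]
  ring

/-- The integrand is the derivative of `e^{-x} x^{α+1} p(x)`, which vanishes at `0` and at `∞`. -/
theorem integral_laguerreWeight_derivative_eq_zero (hα : -1 < α) (p : ℝ[X]) :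
    ∫ x in Ioi 0, ((C (α + 1) - X) * p + X * derivative p).eval x * (Real.exp (-x) * x ^ α)
      = 0 := by
  set F := fun x => Real.exp (-x) * x ^ (α + 1) * p.eval x
  have hderiv : ∀ x ∈ Ioi (0 : ℝ), HasDerivAt F
      (((C (α + 1) - X) * p + X * derivative p).eval x * (Real.exp (-x) * x ^ α)) x := by
    intro x (hx : 0 < x)
    have hexp : HasDerivAt (fun y => Real.exp (-y)) (-Real.exp (-x)) x := by
      simpa using (hasDerivAt_neg x).exp
    refine ((hexp.mul (Real.hasDerivAt_rpow_const (Or.inl hx.ne'))).mul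
      (p.hasDerivAt x)).congr_deriv ?_
    simp only [eval_add, eval_mul, eval_sub, eval_C, eval_X, Pi.mul_apply, add_sub_cancel_right,
      Real.rpow_add_one hx.ne']
    ring
  have hcont : ContinuousWithinAt F (Ici 0) 0 :=
    (((continuous_neg.rexp).continuousAt.mul
      (Real.continuousAt_rpow_const 0 (α + 1) (Or.inr (by linarith)))).mul
      p.continuous.continuousAt).continuousWithinAt
  have hF0 : F 0 = 0 := by simp [F, Real.zero_rpow (by linarith : α + 1 ≠ 0)]
  rw [integral_Ioi_of_hasDerivAt_of_tendsto hcont hderiv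
    (integrableOn_eval_mul_laguerreWeight hα _)
    (tendsto_exp_neg_mul_rpow_mul_eval_atTop (α + 1) p), hF0, sub_zero]

theorem laguerreForm_laguerreOp (hα : -1 < α) (p q : ℝ[X]) :
    laguerreForm hα (laguerreOp α p) q = laguerreForm hα p (laguerreOp α q) := by
  rw [← sub_eq_zero, laguerreForm_apply, laguerreForm_apply,
    ← integral_sub (integrableOn_eval_mul_eval_mul_laguerreWeight hα _ _)
      (integrableOn_eval_mul_eval_mul_laguerreWeight hα _ _)]
  refine (setIntegral_congr_fun measurableSet_Ioi fun x _ => ?_).trans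
    (integral_laguerreWeight_derivative_eq_zero hα (derivative p * q - p * derivative q))
  simp only [laguerreOp, eval_add, eval_mul, eval_sub, eval_C, eval_X, derivative_mul,
    derivative_sub]
  ring

end LaguerreForm

section LaguerreODE

variable {α : ℝ} {ℓ : ℕ → ℝ[X]}

theorem laguerreOp_eq_neg_smul (hα : -1 < α) (hm : ∀ n, (ℓ n).Monic)
    (hd : ∀ n, (ℓ n).natDegree = n)
    (ho : ∀ n m : ℕ, n ≠ m →
      ∫ x in Ioi (0 : ℝ), (ℓ n).eval x * (ℓ m).eval x * (Real.exp (-x) * x ^ α) = 0)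
    (n : ℕ) : laguerreOp α (ℓ n) = -(n : ℝ) • ℓ n := by
  let S : Sequence ℝ := ⟨ℓ, fun i => by rw [degree_eq_natDegree (hm i).ne_zero, hd]⟩
  refine S.apply_eq_smul_of_symmetric (laguerreForm hα) (fun i => (hm i).leadingCoeff ▸ isUnit_one)
    ho (fun p hp => by_contra fun h => (laguerreForm_self_pos hα h).ne' hp)
    (degree_laguerreOp_lt α) (laguerreForm_laguerreOp hα) ?_
  rw [neg_smul, sub_neg_eq_add]
  exact degree_laguerreOp_add_smul_lt α (hd n).le

/-- The factor `n` takes care of `n = 0`, where `ℓ (n - 1)` is `ℓ 0`. -/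
theorem natCast_smul_laguerreOp_pred (hα : -1 < α) (hm : ∀ n, (ℓ n).Monic)
    (hd : ∀ n, (ℓ n).natDegree = n)
    (ho : ∀ n m : ℕ, n ≠ m →
      ∫ x in Ioi (0 : ℝ), (ℓ n).eval x * (ℓ m).eval x * (Real.exp (-x) * x ^ α) = 0)
    (n : ℕ) : (n : ℝ) • laguerreOp α (ℓ (n - 1)) = -((n : ℝ) * (n - 1)) • ℓ (n - 1) := by
  rcases n with _ | k
  · simp
  · rw [Nat.add_sub_cancel, laguerreOp_eq_neg_smul hα hm hd ho, smul_smul]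
    push_cast
    congr 1
    ring

end LaguerreODE

theorem QLag_eigenfunction_general
    (α β : ℝ) (hα : -1 < α) (hβ : -1 < β) (a : ℝ)
    (ℓa ℓb : ℕ → Polynomial ℝ)
    (hamonic : ∀ n, (ℓa n).Monic) (hadeg : ∀ n, (ℓa n).natDegree = n)
    (haorth : ∀ n m : ℕ, n ≠ m →
      ∫ x in Set.Ioi (0 : ℝ),
        (ℓa n).eval x * (ℓa m).eval x * (Real.exp (-x) * x ^ α) = 0)
    (hbmonic : ∀ n, (ℓb n).Monic) (hbdeg : ∀ n, (ℓb n).natDegree = n)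
    (hborth : ∀ n m : ℕ, n ≠ m →
      ∫ x in Set.Ioi (0 : ℝ),
        (ℓb n).eval x * (ℓb m).eval x * (Real.exp (-x) * x ^ β) = 0) :
    ∀ (n : ℕ) (x : ℝ),
      x • (Matrix.of fun i j : Fin 2 =>
          deriv (fun y => deriv (fun z => QLag α β a ℓa ℓb n z i j) y) x)
      + (Matrix.of fun i j : Fin 2 =>
          deriv (fun y => QLag α β a ℓa ℓb n y i j) x) *
          !![α + 1 - x, a * x * (2 + β - α); 0, β + 1 - x]
      + QLag α β a ℓa ℓb n x * !![0, a * (β + 1); 0, 1]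
      = !![-(n : ℝ), 0; 0, -(n : ℝ) + 1] * QLag α β a ℓa ℓb n x := by
  intro n x
  obtain ⟨γ, hγ⟩ : ∃ γ, Real.Gamma ((n : ℝ) + β + 1) / Real.Gamma ((n : ℝ) + α) = γ := ⟨_, rfl⟩
  have hQ : ∀ z, QLag α β a ℓa ℓb n z =
      (!![ℓa n, C a * (ℓb (n + 1) - X * ℓa n);
        -C (a * n * γ) * ℓa (n - 1), C (a ^ 2 * n * γ) * X * ℓa (n - 1) + ℓb n] :
        Matrix (Fin 2) (Fin 2) ℝ[X]).map (eval z) := by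
    intro z
    ext i j
    fin_cases i <;> fin_cases j <;> simp [QLag, hγ]
  have hA := congrArg (eval x) (laguerreOp_eq_neg_smul hα hamonic hadeg haorth n)
  have hpred := congrArg (eval x) (natCast_smul_laguerreOp_pred hα hamonic hadeg haorth n)
  have hB := congrArg (eval x) (laguerreOp_eq_neg_smul hβ hbmonic hbdeg hborth n)
  have hB' := congrArg (eval x) (laguerreOp_eq_neg_smul hβ hbmonic hbdeg hborth (n + 1))
  simp only [laguerreOp, eval_add, eval_mul, eval_sub, eval_C, eval_X, eval_smul, smul_eq_mul]
    at hA hpred hB hB'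
  push_cast at hB'
  simp only [hQ, Matrix.map_apply, Polynomial.deriv]
  ext i j
  fin_cases i <;> fin_cases j <;>
    simp only [of_apply, cons_val', cons_val_fin_one, cons_val_zero, cons_val_one, Fin.isValue,
      Fin.zero_eta, Fin.mk_one, smul_of, Matrix.add_apply, Pi.smul_apply, smul_eq_mul,
      Matrix.mul_apply, Fin.sum_univ_two, map_apply, derivative_mul, derivative_add,
      derivative_sub, derivative_neg, derivative_C, derivative_X, eval_mul, eval_add, eval_sub,
      eval_neg, eval_C, eval_X, derivative_zero, derivative_one, eval_zero, eval_one]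
  · linear_combination hA
  · linear_combination a * hB' - a * x * hA
  · linear_combination -(a * γ) * hpred
  · linear_combination a ^ 2 * γ * x * hpred + hB

/-- The 2×2 Laguerre-type polynomials `Qₙ` are eigenfunctions of the second-order
differential operator
`D = ∂² x I + ∂ [[α+1−x, ax(2+β−α)], [0, β+1−x]] + [[0, a(β+1)], [0, 1]]`
with eigenvalue `diag(−n, −n+1)`. -/
theorem QLag_eigenfunction
    (α β : ℝ) (hα : -1 < α) (hβ : -1 < β) (a : ℝ) (ha : a ≠ 0)
    (ℓa ℓb : ℕ → Polynomial ℝ)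
    (hamonic : ∀ n, (ℓa n).Monic) (hadeg : ∀ n, (ℓa n).natDegree = n)
    (haorth : ∀ n m : ℕ, n ≠ m →
      ∫ x in Set.Ioi (0 : ℝ),
        (ℓa n).eval x * (ℓa m).eval x * (Real.exp (-x) * x ^ α) = 0)
    (hbmonic : ∀ n, (ℓb n).Monic) (hbdeg : ∀ n, (ℓb n).natDegree = n)
    (hborth : ∀ n m : ℕ, n ≠ m →
      ∫ x in Set.Ioi (0 : ℝ),
        (ℓb n).eval x * (ℓb m).eval x * (Real.exp (-x) * x ^ β) = 0) :
    ∀ (n : ℕ) (x : ℝ),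
      x • (Matrix.of fun i j : Fin 2 =>
          deriv (fun y => deriv (fun z => QLag α β a ℓa ℓb n z i j) y) x)
      + (Matrix.of fun i j : Fin 2 =>
          deriv (fun y => QLag α β a ℓa ℓb n y i j) x) *
          !![α + 1 - x, a * x * (2 + β - α); 0, β + 1 - x]
      + QLag α β a ℓa ℓb n x * !![0, a * (β + 1); 0, 1]
      = !![-(n : ℝ), 0; 0, -(n : ℝ) + 1] * QLag α β a ℓa ℓb n x :=
  QLag_eigenfunction_general α β hα hβ a ℓa ℓb hamonic hadeg haorth hbmonic hbdeg hborth

end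
end
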